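/- The 56 vectors of the set U₄ in ℂ⁴ ⊗ ℂ⁴ ⊗ ℂ⁴ (realized as ℂ^(Fin 4 × Fin 4 × Fin 4)) are pairwise orthogonal and each is nonzero; consequently U₄ consists of exactly 56 distinct mutually orthogonal product states. -/
import Mathlib


open scoped ComplexOrder

noncomputable section

/-- ω = exp(2πi/3) -/
def w3 : ℂ := Complex.exp (2 * Real.pi * Complex.I / 3)

/-- standard basis vectors of ℂ⁴ -/
def e4 (a : Fin 4) : Fin 4 → ℂ := fun k => if k = a then 1 else 0

/-- η_i = Σ_{k=0}^{2} ω^{ik} e_k -/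
def eta4 (i : Fin 3) : Fin 4 → ℂ :=
  fun a => ∑ t : Fin 3, w3 ^ ((i : ℕ) * (t : ℕ)) * e4 (Fin.castSucc t) a

/-- ξ_j = Σ_{k=0}^{2} ω^{jk} e_{k+1} -/
def xi4 (j : Fin 3) : Fin 4 → ℂ :=
  fun a => ∑ t : Fin 3, w3 ^ ((j : ℕ) * (t : ℕ)) * e4 t.succ a

/-- φ_i = e₁ + (−1)^i e₂ -/
def phi4 (i : Fin 2) : Fin 4 → ℂ := fun k => e4 1 k + (-1 : ℂ) ^ (i : ℕ) * e4 2 k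

/-- the product vector u ⊗ v ⊗ w -/
def tp4 (u v w : Fin 4 → ℂ) : Fin 4 × Fin 4 × Fin 4 → ℂ :=
  fun p => u p.1 * v p.2.1 * w p.2.2

/-- the stopper state S -/
def stop4 : Fin 4 × Fin 4 × Fin 4 → ℂ :=
  tp4 (fun a => ∑ i : Fin 4, e4 i a) (fun a => ∑ i : Fin 4, e4 i a)
    (fun a => ∑ i : Fin 4, e4 i a)

/-- the 56-member set U₄ -/
def U4 : Set (Fin 4 × Fin 4 × Fin 4 → ℂ) :=
  {x | ∃ r s t : Fin 2, (r, s, t) ≠ (0, 0, 0) ∧ x = tp4 (phi4 r) (phi4 s) (phi4 t)} ∪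
  {x | ∃ i j : Fin 3, (i, j) ≠ (0, 0) ∧
      (x = tp4 (xi4 j) (e4 0) (eta4 i) ∨ x = tp4 (xi4 j) (eta4 i) (e4 3) ∨
       x = tp4 (e4 3) (xi4 j) (eta4 i) ∨ x = tp4 (eta4 i) (e4 3) (xi4 j) ∨
       x = tp4 (eta4 i) (xi4 j) (e4 0) ∨ x = tp4 (e4 0) (eta4 i) (xi4 j))} ∪ {stop4}

/-- the standard Hermitian inner product on ℂ^(Fin 4 × Fin 4 × Fin 4) -/
def inp4 (x y : Fin 4 × Fin 4 × Fin 4 → ℂ) : ℂ :=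
  ∑ p, (starRingEnd ℂ) (x p) * y p

/-! ### Auxiliary facts about `w3` -/

lemma w3_pow3 : w3 ^ 3 = 1 := by
  rw [w3, ← Complex.exp_nat_mul]
  rw [show ((3:ℕ):ℂ) * (2 * Real.pi * Complex.I / 3) = 2 * Real.pi * Complex.I by
    push_cast; ring]
  exact Complex.exp_two_pi_mul_I

lemma w3_ne_one : w3 ≠ 1 := by
  intro h
  rw [w3, Complex.exp_eq_one_iff] at h
  obtain ⟨n, hn⟩ := h
  have hpi : (Real.pi : ℂ) ≠ 0 := by simpa using Real.pi_ne_zero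
  have key : ((3 * n - 1 : ℤ) : ℂ) * (2 * Real.pi * Complex.I) = 0 := by
    push_cast
    linear_combination (-3 : ℂ) * hn
  have h2 : (2 * (Real.pi:ℂ) * Complex.I) ≠ 0 := by
    simp [Complex.I_ne_zero, hpi]
  have h3 : ((3 * n - 1 : ℤ) : ℂ) = 0 := by
    rcases mul_eq_zero.mp key with h | h
    · exact h
    · exact absurd h h2
  have : (3 * n - 1 : ℤ) = 0 := by exact_mod_cast h3
  omega

lemma w3_plus : w3 ^ 2 + w3 + 1 = 0 := by
  have h : (w3 - 1) * (w3 ^ 2 + w3 + 1) = 0 := by linear_combination w3_pow3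
  rcases mul_eq_zero.mp h with h | h
  · exact (w3_ne_one (sub_eq_zero.mp h)).elim
  · exact h

lemma w3_geom (m : ℕ) : 1 + w3 ^ m + w3 ^ (2 * m) = if m % 3 = 0 then 3 else 0 := by
  have hp : ∀ n : ℕ, w3 ^ n = w3 ^ (n % 3) := fun n => by
    conv_lhs => rw [← Nat.div_add_mod n 3]
    rw [pow_add, pow_mul, w3_pow3, one_pow, one_mul]
  rw [hp m, hp (2 * m), Nat.mul_mod]
  have hr : m % 3 < 3 := Nat.mod_lt _ (by norm_num)
  interval_cases h : m % 3 <;> norm_num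
  · linear_combination w3_plus
  · linear_combination w3_plus

lemma w3_conj : (starRingEnd ℂ) w3 = w3 ^ 2 := by
  have h : (starRingEnd ℂ) w3 * w3 = 1 := by
    rw [w3, ← Complex.exp_conj, ← Complex.exp_add]
    have : (starRingEnd ℂ) (2 * Real.pi * Complex.I / 3) = -(2 * Real.pi * Complex.I / 3) := by
      rw [map_div₀, map_mul, map_mul]
      simp [Complex.conj_I, Complex.conj_ofReal, map_ofNat]
      ring
    rw [this]; simp
  have h2 : w3 ^ 2 * w3 = 1 := by rw [← pow_succ]; exact w3_pow3
  have hw : w3 ≠ 0 := by intro h0; rw [h0] at h; simp at h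
  exact mul_right_cancel₀ hw (h.trans h2.symm)

/-! ### Values of the single-party vectors -/

lemma eta4_val (i : Fin 3) : eta4 i = ![1, w3 ^ (i:ℕ), w3 ^ (2*(i:ℕ)), 0] := by
  funext a
  fin_cases a <;>
    simp [eta4, e4, Fin.sum_univ_three,
      show Fin.castSucc (0:Fin 3) = (0:Fin 4) from rfl,
      show Fin.castSucc (1:Fin 3) = (1:Fin 4) from rfl,
      show Fin.castSucc (2:Fin 3) = (2:Fin 4) from rfl] <;> ring

lemma xi4_val (j : Fin 3) : xi4 j = ![0, 1, w3 ^ (j:ℕ), w3 ^ (2*(j:ℕ))] := by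
  funext a
  fin_cases a <;>
    simp [xi4, e4, Fin.sum_univ_three,
      show Fin.succ (0:Fin 3) = (1:Fin 4) from rfl,
      show Fin.succ (1:Fin 3) = (2:Fin 4) from rfl,
      show Fin.succ (2:Fin 3) = (3:Fin 4) from rfl] <;> ring

lemma phi4_val (r : Fin 2) : phi4 r = ![0, 1, (-1:ℂ)^(r:ℕ), 0] := by
  funext a
  fin_cases a <;> simp [phi4, e4]

/-- the all-ones vector -/
def one4 : Fin 4 → ℂ := fun _ => 1

/-- the single-party inner product -/
def ip (x y : Fin 4 → ℂ) : ℂ := ∑ a, (starRingEnd ℂ) (x a) * y a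

lemma ip_tp4 (u v w u' v' w' : Fin 4 → ℂ) :
    inp4 (tp4 u v w) (tp4 u' v' w') = ip u u' * ip v v' * ip w w' := by
  simp only [inp4, tp4, ip, map_mul, Fintype.sum_prod_type, Fin.sum_univ_four]
  ring

lemma pow_merge (a b : ℕ) : ((w3 ^ 2) ^ a) * w3 ^ b = w3 ^ (2 * a + b) := by
  rw [← pow_mul, ← pow_add]

/-! ### The inner-product table -/

lemma ip_eta_eta (i i' : Fin 3) : ip (eta4 i) (eta4 i') = if i = i' then 3 else 0 := by
  simp only [ip, Fin.sum_univ_four, eta4_val, Matrix.cons_val_zero, Matrix.cons_val_one,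
    Matrix.head_cons, Matrix.cons_val_two, Matrix.tail_cons, Matrix.cons_val_three,
    map_pow, w3_conj, map_one, map_zero]
  rw [pow_merge, pow_merge]
  rw [show 2 * (2 * (i:ℕ)) + 2 * (i':ℕ) = 2 * (2 * (i:ℕ) + (i':ℕ)) by ring]
  have h := w3_geom (2 * (i:ℕ) + (i':ℕ))
  have hiff : ((2 * (i:ℕ) + (i':ℕ)) % 3 = 0) ↔ i = i' := by
    rw [Fin.ext_iff]; omega
  simp only [hiff] at h
  linear_combination h

lemma ip_xi_xi (j j' : Fin 3) : ip (xi4 j) (xi4 j') = if j = j' then 3 else 0 := by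
  simp only [ip, Fin.sum_univ_four, xi4_val, Matrix.cons_val_zero, Matrix.cons_val_one,
    Matrix.head_cons, Matrix.cons_val_two, Matrix.tail_cons, Matrix.cons_val_three,
    map_pow, w3_conj, map_one, map_zero]
  rw [pow_merge, pow_merge]
  rw [show 2 * (2 * (j:ℕ)) + 2 * (j':ℕ) = 2 * (2 * (j:ℕ) + (j':ℕ)) by ring]
  have h := w3_geom (2 * (j:ℕ) + (j':ℕ))
  have hiff : ((2 * (j:ℕ) + (j':ℕ)) % 3 = 0) ↔ j = j' := by
    rw [Fin.ext_iff]; omega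
  simp only [hiff] at h
  linear_combination h

lemma ip_one_eta (i : Fin 3) : ip one4 (eta4 i) = if i = 0 then 3 else 0 := by
  simp only [ip, one4, Fin.sum_univ_four, eta4_val, Matrix.cons_val_zero, Matrix.cons_val_one,
    Matrix.head_cons, Matrix.cons_val_two, Matrix.tail_cons, Matrix.cons_val_three, map_one]
  have h := w3_geom (i:ℕ)
  have hiff : ((i:ℕ) % 3 = 0) ↔ i = 0 := by rw [Fin.ext_iff]; omega
  simp only [hiff] at h
  linear_combination h

lemma ip_eta_one (i : Fin 3) : ip (eta4 i) one4 = if i = 0 then 3 else 0 := by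
  simp only [ip, one4, Fin.sum_univ_four, eta4_val, Matrix.cons_val_zero, Matrix.cons_val_one,
    Matrix.head_cons, Matrix.cons_val_two, Matrix.tail_cons, Matrix.cons_val_three,
    map_pow, w3_conj, map_one, map_zero]
  rw [show ((w3^2)^(i:ℕ)) * 1 = (w3^2)^(i:ℕ) * w3 ^ 0 by ring, pow_merge]
  rw [show ((w3^2)^(2*(i:ℕ))) * 1 = (w3^2)^(2*(i:ℕ)) * w3 ^ 0 by ring, pow_merge]
  rw [show 2 * (2*(i:ℕ)) + 0 = 2 * (2 * (i:ℕ) + 0) by ring]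
  have h := w3_geom (2 * (i:ℕ) + 0)
  have hiff : ((2 * (i:ℕ) + 0) % 3 = 0) ↔ i = 0 := by rw [Fin.ext_iff]; omega
  simp only [hiff] at h
  linear_combination h

lemma ip_one_xi (j : Fin 3) : ip one4 (xi4 j) = if j = 0 then 3 else 0 := by
  simp only [ip, one4, Fin.sum_univ_four, xi4_val, Matrix.cons_val_zero, Matrix.cons_val_one,
    Matrix.head_cons, Matrix.cons_val_two, Matrix.tail_cons, Matrix.cons_val_three, map_one]
  have h := w3_geom (j:ℕ)
  have hiff : ((j:ℕ) % 3 = 0) ↔ j = 0 := by rw [Fin.ext_iff]; omega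
  simp only [hiff] at h
  linear_combination h

lemma ip_xi_one (j : Fin 3) : ip (xi4 j) one4 = if j = 0 then 3 else 0 := by
  simp only [ip, one4, Fin.sum_univ_four, xi4_val, Matrix.cons_val_zero, Matrix.cons_val_one,
    Matrix.head_cons, Matrix.cons_val_two, Matrix.tail_cons, Matrix.cons_val_three,
    map_pow, w3_conj, map_one, map_zero]
  rw [show ((w3^2)^(j:ℕ)) * 1 = (w3^2)^(j:ℕ) * w3 ^ 0 by ring, pow_merge]
  rw [show ((w3^2)^(2*(j:ℕ))) * 1 = (w3^2)^(2*(j:ℕ)) * w3 ^ 0 by ring, pow_merge]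
  rw [show 2 * (2*(j:ℕ)) + 0 = 2 * (2 * (j:ℕ) + 0) by ring]
  have h := w3_geom (2 * (j:ℕ) + 0)
  have hiff : ((2 * (j:ℕ) + 0) % 3 = 0) ↔ j = 0 := by rw [Fin.ext_iff]; omega
  simp only [hiff] at h
  linear_combination h

lemma ip_e_e (a b : Fin 4) : ip (e4 a) (e4 b) = if a = b then 1 else 0 := by
  fin_cases a <;> fin_cases b <;> simp [ip, e4, Fin.sum_univ_four]
lemma ip_eta_e3 (i : Fin 3) : ip (eta4 i) (e4 3) = 0 := by
  simp [ip, eta4_val, e4, Fin.sum_univ_four]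
lemma ip_e3_eta (i : Fin 3) : ip (e4 3) (eta4 i) = 0 := by
  simp [ip, eta4_val, e4, Fin.sum_univ_four]
lemma ip_xi_e0 (j : Fin 3) : ip (xi4 j) (e4 0) = 0 := by
  simp [ip, xi4_val, e4, Fin.sum_univ_four]
lemma ip_e0_xi (j : Fin 3) : ip (e4 0) (xi4 j) = 0 := by
  simp [ip, xi4_val, e4, Fin.sum_univ_four]
lemma ip_phi_phi (r s : Fin 2) : ip (phi4 r) (phi4 s) = if r = s then 2 else 0 := by
  fin_cases r <;> fin_cases s <;> simp [ip, phi4_val, Fin.sum_univ_four] <;> norm_num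
lemma ip_phi_e0 (r : Fin 2) : ip (phi4 r) (e4 0) = 0 := by
  simp [ip, phi4_val, e4, Fin.sum_univ_four]
lemma ip_e0_phi (r : Fin 2) : ip (e4 0) (phi4 r) = 0 := by
  simp [ip, phi4_val, e4, Fin.sum_univ_four]
lemma ip_phi_e3 (r : Fin 2) : ip (phi4 r) (e4 3) = 0 := by
  simp [ip, phi4_val, e4, Fin.sum_univ_four]
lemma ip_e3_phi (r : Fin 2) : ip (e4 3) (phi4 r) = 0 := by
  simp [ip, phi4_val, e4, Fin.sum_univ_four]
lemma ip_one_phi (r : Fin 2) : ip one4 (phi4 r) = if r = 0 then 2 else 0 := by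
  fin_cases r <;> simp [ip, one4, phi4_val, Fin.sum_univ_four] <;> norm_num
lemma ip_phi_one (r : Fin 2) : ip (phi4 r) one4 = if r = 0 then 2 else 0 := by
  fin_cases r <;> simp [ip, one4, phi4_val, Fin.sum_univ_four] <;> norm_num
lemma ip_one_one : ip one4 one4 = 4 := by
  simp [ip, one4, Fin.sum_univ_four]
lemma ip_one_e (a : Fin 4) : ip one4 (e4 a) = 1 := by
  fin_cases a <;> simp [ip, one4, e4, Fin.sum_univ_four]
lemma ip_e_one (a : Fin 4) : ip (e4 a) one4 = 1 := by
  fin_cases a <;> simp [ip, one4, e4, Fin.sum_univ_four]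
lemma ip_e0_e0 : ip (e4 0) (e4 0) = 1 := by rw [ip_e_e]; norm_num
lemma ip_e3_e3 : ip (e4 3) (e4 3) = 1 := by rw [ip_e_e]; norm_num
lemma ip_e0_e3 : ip (e4 0) (e4 3) = 0 := by rw [ip_e_e, if_neg (by decide)]
lemma ip_e3_e0 : ip (e4 3) (e4 0) = 0 := by rw [ip_e_e, if_neg (by decide)]

lemma stop4_eq : stop4 = tp4 one4 one4 one4 := by
  have h : (fun a => ∑ i : Fin 4, e4 i a) = one4 := by
    funext a
    fin_cases a <;> simp [e4, one4, Fin.sum_univ_four]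
  rw [stop4, h]

/-! ### Indexing of the 56 vectors -/

abbrev P33 := Fin 3 × Fin 3
abbrev Idx4 := (Fin 2 × Fin 2 × Fin 2) ⊕ (P33 ⊕ (P33 ⊕ (P33 ⊕ (P33 ⊕ (P33 ⊕ (P33 ⊕ Unit))))))

def fIdx : Idx4 → (Fin 4 × Fin 4 × Fin 4 → ℂ)
  | .inl (r, s, t) => tp4 (phi4 r) (phi4 s) (phi4 t)
  | .inr (.inl (i, j)) => tp4 (xi4 j) (e4 0) (eta4 i)
  | .inr (.inr (.inl (i, j))) => tp4 (xi4 j) (eta4 i) (e4 3)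
  | .inr (.inr (.inr (.inl (i, j)))) => tp4 (e4 3) (xi4 j) (eta4 i)
  | .inr (.inr (.inr (.inr (.inl (i, j))))) => tp4 (eta4 i) (e4 3) (xi4 j)
  | .inr (.inr (.inr (.inr (.inr (.inl (i, j)))))) => tp4 (eta4 i) (xi4 j) (e4 0)
  | .inr (.inr (.inr (.inr (.inr (.inr (.inl (i, j))))))) => tp4 (e4 0) (eta4 i) (xi4 j)
  | .inr (.inr (.inr (.inr (.inr (.inr (.inr _)))))) => tp4 one4 one4 one4

def P33S : Finset P33 := Finset.univ.filter (fun ij => ij ≠ (0, 0))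
def S222 : Finset (Fin 2 × Fin 2 × Fin 2) := Finset.univ.filter (fun rst => rst ≠ (0, 0, 0))

def SIdx : Finset Idx4 :=
  S222.disjSum (P33S.disjSum (P33S.disjSum (P33S.disjSum (P33S.disjSum (P33S.disjSum
    (P33S.disjSum (Finset.univ : Finset Unit)))))))

set_option maxHeartbeats 2000000 in
lemma key4 : ∀ a ∈ SIdx, ∀ b ∈ SIdx, a ≠ b → inp4 (fIdx a) (fIdx b) = 0 := by
  intro a ha b hb hne
  rcases a with ⟨r,s,t⟩ | ⟨⟨i,j⟩ | ⟨⟨i,j⟩ | ⟨⟨i,j⟩ | ⟨⟨i,j⟩ | ⟨⟨i,j⟩ | ⟨⟨i,j⟩ | ⟨⟩⟩⟩⟩⟩⟩⟩ <;>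
  rcases b with ⟨r',s',t'⟩ | ⟨⟨i',j'⟩ | ⟨⟨i',j'⟩ | ⟨⟨i',j'⟩ | ⟨⟨i',j'⟩ | ⟨⟨i',j'⟩ | ⟨⟨i',j'⟩ | ⟨⟩⟩⟩⟩⟩⟩⟩ <;>
  simp only [SIdx, S222, P33S, Finset.inl_mem_disjSum, Finset.inr_mem_disjSum,
    Finset.mem_filter, Finset.mem_univ, true_and] at ha hb <;>
  simp only [fIdx] <;>
  rw [ip_tp4] <;>
  simp only [ip_eta_eta, ip_xi_xi, ip_eta_e3, ip_e3_eta, ip_xi_e0, ip_e0_xi, ip_phi_phi,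
    ip_phi_e0, ip_e0_phi, ip_phi_e3, ip_e3_phi, ip_one_phi, ip_phi_one, ip_one_eta, ip_eta_one,
    ip_one_xi, ip_xi_one, ip_one_one, ip_one_e, ip_e_one, ip_e0_e0, ip_e3_e3, ip_e0_e3, ip_e3_e0,
    mul_zero, zero_mul, mul_one, one_mul] <;>
  first
    | exact absurd rfl hne
    | (split_ifs <;> simp_all)

lemma nz4 : ∀ a : Idx4, inp4 (fIdx a) (fIdx a) ≠ 0 := by
  intro a
  rcases a with ⟨r,s,t⟩ | ⟨⟨i,j⟩ | ⟨⟨i,j⟩ | ⟨⟨i,j⟩ | ⟨⟨i,j⟩ | ⟨⟨i,j⟩ | ⟨⟨i,j⟩ | ⟨⟩⟩⟩⟩⟩⟩⟩ <;>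
  simp only [fIdx] <;> rw [ip_tp4] <;>
  simp [ip_eta_eta, ip_xi_xi, ip_phi_phi, ip_one_one, ip_e0_e0, ip_e3_e3]

lemma himg : U4 = fIdx '' ↑SIdx := by
  ext x
  constructor
  · intro hx
    rcases hx with (⟨r,s,t,hne,rfl⟩ | ⟨i,j,hne,hc⟩) | hx
    · exact ⟨.inl (r,s,t), by simp [SIdx, S222]; rintro rfl rfl rfl; exact hne rfl, rfl⟩
    · rcases hc with rfl|rfl|rfl|rfl|rfl|rfl
      · exact ⟨.inr (.inl (i,j)), by simp [SIdx, P33S]; rintro rfl rfl; exact hne rfl, rfl⟩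
      · exact ⟨.inr (.inr (.inl (i,j))),
          by simp [SIdx, P33S]; rintro rfl rfl; exact hne rfl, rfl⟩
      · exact ⟨.inr (.inr (.inr (.inl (i,j)))),
          by simp [SIdx, P33S]; rintro rfl rfl; exact hne rfl, rfl⟩
      · exact ⟨.inr (.inr (.inr (.inr (.inl (i,j))))),
          by simp [SIdx, P33S]; rintro rfl rfl; exact hne rfl, rfl⟩
      · exact ⟨.inr (.inr (.inr (.inr (.inr (.inl (i,j)))))),
          by simp [SIdx, P33S]; rintro rfl rfl; exact hne rfl, rfl⟩
      · exact ⟨.inr (.inr (.inr (.inr (.inr (.inr (.inl (i,j))))))),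
          by simp [SIdx, P33S]; rintro rfl rfl; exact hne rfl, rfl⟩
    · refine ⟨.inr (.inr (.inr (.inr (.inr (.inr (.inr ())))))), by simp [SIdx], ?_⟩
      rw [Set.mem_singleton_iff] at hx
      rw [hx, stop4_eq]
      rfl
  · rintro ⟨a, ha, rfl⟩
    rw [Finset.mem_coe] at ha
    rcases a with ⟨r,s,t⟩ | ⟨⟨i,j⟩ | ⟨⟨i,j⟩ | ⟨⟨i,j⟩ | ⟨⟨i,j⟩ | ⟨⟨i,j⟩ | ⟨⟨i,j⟩ | ⟨⟩⟩⟩⟩⟩⟩⟩ <;>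
      simp only [SIdx, S222, P33S, Finset.inl_mem_disjSum, Finset.inr_mem_disjSum,
        Finset.mem_filter, Finset.mem_univ, true_and] at ha
    · exact Or.inl (Or.inl ⟨r, s, t, ha, rfl⟩)
    · exact Or.inl (Or.inr ⟨i, j, ha, Or.inl rfl⟩)
    · exact Or.inl (Or.inr ⟨i, j, ha, Or.inr (Or.inl rfl)⟩)
    · exact Or.inl (Or.inr ⟨i, j, ha, Or.inr (Or.inr (Or.inl rfl))⟩)
    · exact Or.inl (Or.inr ⟨i, j, ha, Or.inr (Or.inr (Or.inr (Or.inl rfl)))⟩)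
    · exact Or.inl (Or.inr ⟨i, j, ha, Or.inr (Or.inr (Or.inr (Or.inr (Or.inl rfl))))⟩)
    · exact Or.inl (Or.inr ⟨i, j, ha, Or.inr (Or.inr (Or.inr (Or.inr (Or.inr rfl))))⟩)
    · exact Or.inr (by rw [Set.mem_singleton_iff, stop4_eq]; rfl)

/-- The 56 vectors of U₄ are nonzero, pairwise orthogonal, and U₄ has exactly 56
elements. -/
theorem U4_pairwise_orthogonal_nonzero :
    (∀ x ∈ U4, x ≠ 0) ∧
    (∀ x ∈ U4, ∀ y ∈ U4, x ≠ y → inp4 x y = 0) ∧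
    U4.ncard = 56 := by
  have hinj : Set.InjOn fIdx ↑SIdx := by
    intro a ha b hb hfe
    by_contra hne
    have h := key4 a (Finset.mem_coe.mp ha) b (Finset.mem_coe.mp hb) hne
    rw [hfe] at h
    exact nz4 b h
  refine ⟨?_, ?_, ?_⟩
  · intro x hx
    rw [himg] at hx
    obtain ⟨a, _, rfl⟩ := hx
    intro h0
    apply nz4 a
    rw [h0]
    simp [inp4]
  · intro x hx y hy hxy
    rw [himg] at hx hy
    obtain ⟨a, ha, rfl⟩ := hx
    obtain ⟨b, hb, rfl⟩ := hy
    exact key4 a (Finset.mem_coe.mp ha) b (Finset.mem_coe.mp hb) (fun h => hxy (by rw [h]))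
  · rw [himg, Set.ncard_image_of_injOn hinj, Set.ncard_coe_finset]
    rw [SIdx]
    simp only [Finset.card_disjSum, Finset.card_univ]
    have h1 : S222.card = 7 := by decide
    have h2 : P33S.card = 8 := by decide
    rw [h1, h2]
    simp
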